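/- Let k ≥ 2 be an integer and let π be the PageRank vector of Γ(k) for α = 1 − 1/k. Then the squared Euclidean norm of π satisfies ‖π‖₂² < π_{C1}² + (9/8)·π_{C2}² + 3/(2(k+3)) + 9/(4k(k+3)²) + π_A². -/

import Mathlib

/-- Arc relation of the graph `Γ(k)` on vertex indices `0, ..., k+2`, where
vertex `0` is `C1`, vertex `1` is `C2`, vertex `i+1` is `B_i` for `1 ≤ i ≤ k`,
and vertex `k+2` is `A`.  `PRadj k j i` holds iff there is an arc from `j` to `i`. -/
def PRadj (k j i : ℕ) : Prop :=
  (j = 0 ∧ (i = 0 ∨ i = 1)) ∨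
  (j = 1 ∧ (i = 0 ∨ i = 1 ∨ i = 2)) ∨
  (2 ≤ j ∧ j ≤ k + 1 ∧ (i = 0 ∨ i = 1 ∨ i = j + 1)) ∨
  (j = k + 2 ∧ i = k + 2)

instance (k j i : ℕ) : Decidable (PRadj k j i) := by unfold PRadj; infer_instance

/-- Out-degree of vertex `j` in `Γ(k)`:  `deg(C1) = 2`, `deg(A) = 1`, all others `3`. -/
def PRdeg (k j : ℕ) : ℕ := if j = 0 then 2 else if j = k + 2 then 1 else 3

/-- The PageRank matrix `R_α` of `Γ(k)`:  entry `(i, j)` is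
`α / deg(j) + (1 - α)/(k+3)` if there is an arc from `j` to `i`, and `(1 - α)/(k+3)`
otherwise. -/
noncomputable def PRmat (k : ℕ) (α : ℝ) : Matrix (Fin (k + 3)) (Fin (k + 3)) ℝ :=
  fun i j =>
    if PRadj k j.1 i.1 then α / (PRdeg k j.1 : ℝ) + (1 - α) / ((k : ℝ) + 3)
    else (1 - α) / ((k : ℝ) + 3)

/-- `π` is a PageRank vector of `Γ(k)` for jumping parameter `α`:  it has nonnegative
entries summing to `1` and satisfies `R_α π = π`. -/
def IsPageRank (k : ℕ) (α : ℝ) (π : Fin (k + 3) → ℝ) : Prop :=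
  (∀ v, 0 ≤ π v) ∧ (∑ v, π v = 1) ∧ (PRmat k α).mulVec π = π

/-!
The only arc into `B_m` comes from its predecessor on the path `C2 → B1 → ⋯ → Bk`, which has
out-degree 3, so along this path the PageRank equation reads `π_{B_m} = β π_{B_{m-1}} + c` with
`β = α / 3 ≤ 1 / 3` and `c = (1 - α) / (k + 3) = 1 / (k (k + 3))`. Hence
`π_{B_m} ≤ β ^ m π_{C2} + 3c/2`, and squaring and summing the geometric series
(`∑ β ^ m ≤ 1/2`, `∑ β ^ (2m) ≤ 1/8`) bounds `∑ π_{B_m}²` by `π_{C2}²/8 + 3c/2 + k (3c/2)²`.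
-/

open Finset

lemma sum_range_pow_succ_le {r : ℝ} (hr0 : 0 ≤ r) (hr1 : r < 1) (n : ℕ) :
    ∑ i ∈ range n, r ^ (i + 1) ≤ r / (1 - r) := by
  simp_rw [pow_succ', ← mul_sum]
  rw [div_eq_mul_one_div]
  refine mul_le_mul_of_nonneg_left ?_ hr0
  have := geom_sum_Ico_le_of_lt_one (m := 0) (n := n) hr0 hr1
  rwa [← range_eq_Ico, pow_zero] at this

lemma le_pow_mul_add_of_le_mul_add {u : ℕ → ℝ} {β c t : ℝ} {n : ℕ} (hβ : 0 ≤ β)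
    (ht0 : 0 ≤ t) (ht : β * t + c ≤ t) (hu : ∀ m < n, u (m + 1) ≤ β * u m + c) :
    ∀ m ≤ n, u m ≤ β ^ m * u 0 + t := by
  intro m hm
  induction m with
  | zero => simpa using ht0
  | succ m ih =>
    calc u (m + 1) ≤ β * u m + c := hu m hm
      _ ≤ β * (β ^ m * u 0 + t) + c := by gcongr; exact ih (by omega)
      _ ≤ β ^ (m + 1) * u 0 + t := by linear_combination ht

lemma sum_sq_pow_mul_add_le {β x t : ℝ} (hβ0 : 0 ≤ β) (hβ : β ≤ 1 / 3) (hx0 : 0 ≤ x)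
    (hx1 : x ≤ 1) (ht : 0 ≤ t) (n : ℕ) :
    ∑ m ∈ range n, (β ^ (m + 1) * x + t) ^ 2 ≤ x ^ 2 / 8 + t + n * t ^ 2 := by
  have hlin : ∑ m ∈ range n, β ^ (m + 1) ≤ 1 / 2 := by
    refine (sum_range_pow_succ_le hβ0 (by linarith) n).trans ?_
    rw [div_le_div_iff₀ (by linarith) (by norm_num)]; linarith
  have hsq : ∑ m ∈ range n, (β ^ 2) ^ (m + 1) ≤ 1 / 8 := by
    refine (sum_range_pow_succ_le (sq_nonneg β) (by nlinarith) n).trans ?_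
    rw [div_le_div_iff₀ (by nlinarith) (by norm_num)]; nlinarith
  have hexpand : ∑ m ∈ range n, (β ^ (m + 1) * x + t) ^ 2 =
      (∑ m ∈ range n, (β ^ 2) ^ (m + 1)) * x ^ 2
        + 2 * t * x * ∑ m ∈ range n, β ^ (m + 1) + n * t ^ 2 := by
    rw [sum_mul, mul_sum, ← sum_add_distrib, ← card_range n, ← nsmul_eq_mul, ← sum_const,
      card_range, ← sum_add_distrib]
    exact sum_congr rfl fun m _ => by ring
  rw [hexpand]
  nlinarith [mul_le_mul_of_nonneg_right hsq (sq_nonneg x), mul_nonneg ht hx0,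
    mul_nonneg (mul_nonneg ht hx0) (sub_nonneg.2 hlin), mul_nonneg ht (sub_nonneg.2 hx1)]

lemma sum_sq_le_of_le_mul_add {u : ℕ → ℝ} {β c : ℝ} {n : ℕ} (hβ0 : 0 ≤ β) (hβ : β ≤ 1 / 3)
    (hc : 0 ≤ c) (hu_nonneg : ∀ m, 0 ≤ u m) (hu0 : u 0 ≤ 1)
    (hu : ∀ m < n, u (m + 1) ≤ β * u m + c) :
    ∑ m ∈ range n, u (m + 1) ^ 2 ≤ u 0 ^ 2 / 8 + 3 * c / 2 + n * (3 * c / 2) ^ 2 := by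
  -- `3 * c / 2 = c / (1 - 1 / 3)` is the fixed point of `x ↦ x / 3 + c`.
  have hbound := le_pow_mul_add_of_le_mul_add hβ0 (t := 3 * c / 2) (by positivity)
    (by nlinarith) hu
  refine (sum_le_sum fun m hm => ?_).trans
    (sum_sq_pow_mul_add_le hβ0 hβ (hu_nonneg 0) hu0 (by positivity) n)
  exact pow_le_pow_left₀ (hu_nonneg _) (hbound (m + 1) (by simp at hm; omega)) 2

def extendByZero {n : ℕ} (π : Fin n → ℝ) (i : ℕ) : ℝ := if h : i < n then π ⟨i, h⟩ else 0

lemma extendByZero_of_lt {n i : ℕ} (π : Fin n → ℝ) (h : i < n) : extendByZero π i = π ⟨i, h⟩ :=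
  dif_pos h

lemma extendByZero_nonneg {n : ℕ} {π : Fin n → ℝ} (hπ : ∀ v, 0 ≤ π v) (i : ℕ) :
    0 ≤ extendByZero π i := by
  unfold extendByZero; split_ifs
  exacts [hπ _, le_rfl]

lemma sum_sq_eq_sum_range_extendByZero {n : ℕ} (π : Fin n → ℝ) :
    ∑ v, π v ^ 2 = ∑ i ∈ range n, extendByZero π i ^ 2 := by
  rw [← Fin.sum_univ_eq_sum_range (fun i => extendByZero π i ^ 2)]
  exact sum_congr rfl fun v _ => by rw [extendByZero_of_lt π v.isLt]

lemma PRadj_succ_iff {k m j : ℕ} (hm : 1 ≤ m) (hmk : m ≤ k) : PRadj k j (m + 1) ↔ j = m := by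
  unfold PRadj; omega

lemma PRdeg_eq_three {k m : ℕ} (hm : 1 ≤ m) (hmk : m ≤ k) : PRdeg k m = 3 := by
  unfold PRdeg; rw [if_neg (by omega), if_neg (by omega)]

lemma PRmat_succ_apply {k m : ℕ} (α : ℝ) (hm : 1 ≤ m) (hmk : m ≤ k) (j : Fin (k + 3)) :
    PRmat k α ⟨m + 1, by omega⟩ j =
      (if j = ⟨m, by omega⟩ then α / 3 else 0) + (1 - α) / ((k : ℝ) + 3) := by
  unfold PRmat
  simp only [PRadj_succ_iff hm hmk, Fin.ext_iff]
  split_ifs with hj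
  · rw [hj, PRdeg_eq_three hm hmk, Nat.cast_ofNat]
  · rw [zero_add]

lemma IsPageRank.extendByZero_succ {k m : ℕ} {α : ℝ} {π : Fin (k + 3) → ℝ}
    (hπ : IsPageRank k α π) (hm : 1 ≤ m) (hmk : m ≤ k) :
    extendByZero π (m + 1) = α / 3 * extendByZero π m + (1 - α) / ((k : ℝ) + 3) := by
  obtain ⟨-, hsum, hfix⟩ := hπ
  have h := congr_fun hfix ⟨m + 1, by omega⟩
  simp only [Matrix.mulVec, dotProduct, PRmat_succ_apply α hm hmk, add_mul, sum_add_distrib,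
    ite_mul, zero_mul, sum_ite_eq', mem_univ, if_true, ← mul_sum, hsum, mul_one] at h
  rw [extendByZero_of_lt π (by omega), extendByZero_of_lt π (by omega), ← h]

/-- For `k ≥ 2` and `α = 1 - 1/k`, the PageRank vector satisfies
`‖π‖₂² < π_{C1}² + (9/8)·π_{C2}² + 3/(2(k+3)) + 9/(4k(k+3)²) + π_A²`. -/
theorem pagerank_sq_norm_upper_bound (k : ℕ) (hk : 2 ≤ k) (π : Fin (k + 3) → ℝ)
    (hπ : IsPageRank k (1 - 1 / (k : ℝ)) π) :
    (∑ v, π v ^ 2) <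
      π ⟨0, by omega⟩ ^ 2 + (9 / 8) * π ⟨1, by omega⟩ ^ 2
        + 3 / (2 * ((k : ℝ) + 3)) + 9 / (4 * (k : ℝ) * ((k : ℝ) + 3) ^ 2)
        + π ⟨k + 2, by omega⟩ ^ 2 := by
  have hk' : (2 : ℝ) ≤ k := by exact_mod_cast hk
  have hinv : 0 < 1 / (k : ℝ) ∧ 1 / (k : ℝ) < 1 :=
    ⟨by positivity, (div_lt_one (by positivity)).2 (by linarith)⟩
  have hC2_le : π ⟨1, by omega⟩ ≤ 1 :=
    hπ.2.1 ▸ single_le_sum (fun v _ => hπ.1 v) (mem_univ _)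
  have hpath := sum_sq_le_of_le_mul_add (u := fun m => extendByZero π (m + 1)) (n := k)
    (by linarith) (by linarith) (by rw [sub_sub_cancel]; positivity)
    (fun m => extendByZero_nonneg hπ.1 _) (by rwa [zero_add, extendByZero_of_lt π (by omega)])
    fun m hm => (hπ.extendByZero_succ (by omega) (by omega)).le
  have hc : (1 - (1 - 1 / (k : ℝ))) / ((k : ℝ) + 3) = 1 / (k * (k + 3)) := by field_simp; ring
  rw [zero_add, extendByZero_of_lt π (by omega : 1 < k + 3), hc] at hpath
  have hlin : 3 * (1 / (k * (k + 3))) / 2 < 3 / (2 * ((k : ℝ) + 3)) := by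
    rw [div_lt_div_iff₀ (by positivity) (by positivity)]; field_simp; nlinarith
  have hquad : (k : ℝ) * (3 * (1 / (k * (k + 3))) / 2) ^ 2 =
      9 / (4 * (k : ℝ) * ((k : ℝ) + 3) ^ 2) := by
    field_simp; ring
  rw [sum_sq_eq_sum_range_extendByZero, sum_range_succ, sum_range_succ', sum_range_succ',
    extendByZero_of_lt π (by omega : 0 < k + 3), extendByZero_of_lt π (by omega : 1 < k + 3),
    extendByZero_of_lt π (by omega : k + 2 < k + 3)]
  linarith
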